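/- Let p be a prime, s a positive integer, and let f : F⁴ → F be given by f(i,j,k,t) = j + i·t. Then the Type II ℓ=4 graph Q(p,s,f) has girth at least 6. -/

import Mathlib

/-!
The graph is bipartite, so its cycles have even length and girth at least 6 amounts to the
absence of 4-cycles: no two variable nodes may share two constraint nodes. Going through the
node types this is immediate from the adjacency rules except for two nodes `(t, b, d)'` and
`(t', b', d')'` with `t ≠ t'` that are both adjacent to `(i, j, k)_c` and `(i', j', k')_c`.
There `k + i·t = k' + i'·t` and `k + i·t' = k' + i'·t'` force `i = i'` and `k = k'`, and then
`j + i·t = j' + i·t` forces `j = j'`.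
-/

open scoped Classical

namespace TypeII4

/-- Variable nodes of the Type II ℓ=4 graph: the root `r`, the nodes `(x,j)` (j ∈ F), the
nodes `(i,j)` (i, j ∈ F), and the nodes `(i,j,k)'` (i, j, k ∈ F). -/
abbrev VN (F : Type*) := Unit ⊕ (F ⊕ ((F × F) ⊕ (F × F × F)))

/-- Constraint nodes of the Type II ℓ=4 graph: `c_x`, the nodes `c_i` (i ∈ F), the nodes
`(x,i,j)_c` (i, j ∈ F), and the nodes `(i,j,k)_c` (i, j, k ∈ F). -/
abbrev CN (F : Type*) := Unit ⊕ (F ⊕ ((F × F) ⊕ (F × F × F)))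

/-- Adjacency of the Type II ℓ=4 graph `Q(p,s,f)`:
`r ~ c_x`; `r ~ c_i`; `c_x ~ (x,j)`; `c_i ~ (i,j)`; `(x,i) ~ (x,i,j)_c`;
`(i,j) ~ (i,j,k)_c`; `(x,i,j)_c ~ (i,j,t)'` for every `t`; and
`(i,j,k)_c ~ (t, k + i·t, f(i,j,k,t))'` for every `t`. -/
def adj (F : Type*) [Field F] (f : F → F → F → F → F) : VN F → CN F → Prop
  | Sum.inl _, Sum.inl _ => True                                  -- r ~ c_x
  | Sum.inl _, Sum.inr (Sum.inl _) => True                        -- r ~ c_i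
  | Sum.inr (Sum.inl _), Sum.inl _ => True                        -- (x,j) ~ c_x
  | Sum.inr (Sum.inl i), Sum.inr (Sum.inr (Sum.inl (i', _))) =>
      i' = i                                                      -- (x,i) ~ (x,i,j)_c
  | Sum.inr (Sum.inr (Sum.inl (i, _))), Sum.inr (Sum.inl k) =>
      k = i                                                       -- c_i ~ (i,j)
  | Sum.inr (Sum.inr (Sum.inl (i, j))), Sum.inr (Sum.inr (Sum.inr (i', j', _))) =>
      i' = i ∧ j' = j                                             -- (i,j) ~ (i,j,k)_c
  | Sum.inr (Sum.inr (Sum.inr (a, b, _))), Sum.inr (Sum.inr (Sum.inl (i, j))) =>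
      i = a ∧ j = b                                               -- (x,i,j)_c ~ (i,j,t)'
  | Sum.inr (Sum.inr (Sum.inr (a, b, c))), Sum.inr (Sum.inr (Sum.inr (i, j, k))) =>
      b = k + i * a ∧ c = f i j k a               -- (i,j,k)_c ~ (t, k+i·t, f(i,j,k,t))'
  | _, _ => False

end TypeII4

/-- The simple graph on the disjoint union `V ⊕ C` associated to a bipartite adjacency
relation between variable nodes `V` and constraint nodes `C`. -/
def bip {V C : Type*} (adj : V → C → Prop) : SimpleGraph (V ⊕ C) where
  Adj x y :=
    (∃ v c, x = Sum.inl v ∧ y = Sum.inr c ∧ adj v c) ∨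
    (∃ v c, x = Sum.inr c ∧ y = Sum.inl v ∧ adj v c)
  symm := by
    constructor
    rintro x y (⟨v, c, hx, hy, h⟩ | ⟨v, c, hx, hy, h⟩)
    · exact Or.inr ⟨v, c, hy, hx, h⟩
    · exact Or.inl ⟨v, c, hy, hx, h⟩
  loopless := by
    constructor
    rintro x (⟨v, c, hx, hy, h⟩ | ⟨v, c, hx, hy, h⟩) <;> subst hx <;> simp at hy

namespace SimpleGraph

variable {V : Type*} {G : SimpleGraph V}

theorem six_le_egirth_of_coloring_bool (c : G.Coloring Bool)
    (hC4 : ∀ a b c d, G.Adj a b → G.Adj b c → G.Adj c d → G.Adj d a → a = c ∨ b = d) :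
    6 ≤ G.egirth := by
  rw [le_egirth]
  intro u w hw
  by_contra! hlt
  have hlen : w.length = 4 := by
    have h3 := hw.three_le_length
    have heven : Even w.length := (c.even_length_iff_congr w).mpr Iff.rfl
    have h6 : w.length < 6 := by exact_mod_cast hlt
    obtain ⟨k, hk⟩ := heven
    omega
  have hadj (i : ℕ) (hi : i < 4) : G.Adj (w.getVert i) (w.getVert (i + 1)) :=
    w.adj_getVert_succ (hlen ▸ hi)
  have hne (i j : ℕ) (hij : i ≠ j) (hi : i ≤ 3) (hj : j ≤ 3) : w.getVert i ≠ w.getVert j :=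
    fun h => hij (hw.getVert_injOn' (by simp [hlen, hi]) (by simp [hlen, hj]) h)
  have h4 : w.getVert 4 = w.getVert 0 := by
    rw [← hlen, Walk.getVert_length, Walk.getVert_zero]
  rcases hC4 _ _ _ _ (hadj 0 (by norm_num)) (hadj 1 (by norm_num)) (hadj 2 (by norm_num))
    (h4 ▸ hadj 3 (by norm_num)) with h | h
  · exact hne 0 2 (by norm_num) (by norm_num) (by norm_num) h
  · exact hne 1 3 (by norm_num) (by norm_num) (by norm_num) h

end SimpleGraph

section Bip

variable {V C : Type*} {adj : V → C → Prop}

@[simp] theorem bip_adj_inl_inr {v : V} {c : C} : (bip adj).Adj (.inl v) (.inr c) ↔ adj v c := by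
  simp [bip]

@[simp] theorem bip_adj_inr_inl {v : V} {c : C} : (bip adj).Adj (.inr c) (.inl v) ↔ adj v c := by
  simp [bip]

@[simp] theorem not_bip_adj_inl_inl {v v' : V} : ¬(bip adj).Adj (.inl v) (.inl v') := by
  simp [bip]

@[simp] theorem not_bip_adj_inr_inr {c c' : C} : ¬(bip adj).Adj (.inr c) (.inr c') := by
  simp [bip]

def bip.coloring (adj : V → C → Prop) : (bip adj).Coloring Bool :=
  SimpleGraph.Coloring.mk Sum.isLeft fun {x y} h => by
    rcases x with v | c <;> rcases y with v' | c' <;> simp_all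

theorem six_le_egirth_bip
    (h : ∀ v v' c c', adj v c → adj v c' → adj v' c → adj v' c' → v = v' ∨ c = c') :
    6 ≤ (bip adj).egirth := by
  refine SimpleGraph.six_le_egirth_of_coloring_bool (bip.coloring adj)
    fun x y z w hxy hyz hzw hwx => ?_
  rcases x with v | c <;> rcases y with v₁ | c₁ <;> simp at hxy <;>
    rcases z with v' | c' <;> simp at hyz <;> rcases w with v₂ | c₂ <;> simp at hzw hwx
  · simpa using h v v' c₁ c₂ hxy hwx hyz hzw
  · simpa [or_comm] using h v₁ v₂ c c' hxy hyz hwx hzw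

end Bip

theorem eq_and_eq_of_add_mul_eq_add_mul {R : Type*} [CommRing R] [NoZeroDivisors R]
    {a₁ a₂ e₁ e₂ k₁ k₂ : R} (ha : a₁ ≠ a₂)
    (h₁ : k₁ + e₁ * a₁ = k₂ + e₂ * a₁) (h₂ : k₁ + e₁ * a₂ = k₂ + e₂ * a₂) :
    e₁ = e₂ ∧ k₁ = k₂ := by
  have he : e₁ = e₂ := by
    have : (e₁ - e₂) * (a₁ - a₂) = 0 := by linear_combination h₁ - h₂
    simpa [sub_eq_zero, ha] using this
  subst he
  exact ⟨rfl, by simpa using h₁⟩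

namespace TypeII4

theorem eq_or_eq_of_adj (F : Type*) [Field F] {v v' : VN F} {c c' : CN F}
    (hvc : adj F (fun i j _ t => j + i * t) v c) (hvc' : adj F (fun i j _ t => j + i * t) v c')
    (hv'c : adj F (fun i j _ t => j + i * t) v' c)
    (hv'c' : adj F (fun i j _ t => j + i * t) v' c') : v = v' ∨ c = c' := by
  by_contra! ⟨hv, hc⟩
  rcases v with _ | (m1 | (⟨i1, j1⟩ | ⟨a1, b1, d1⟩)) <;>
  rcases v' with _ | (m2 | (⟨i2, j2⟩ | ⟨a2, b2, d2⟩)) <;>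
  rcases c with _ | (n1 | (⟨x1, y1⟩ | ⟨e1, g1, k1⟩)) <;>
  rcases c' with _ | (n2 | (⟨x2, y2⟩ | ⟨e2, g2, k2⟩)) <;>
  simp_all [adj]
  obtain ⟨rfl, rfl⟩ := eq_and_eq_of_add_mul_eq_add_mul hv hvc'.1 hv'c'.1
  exact hc rfl (by simpa using hvc'.2) rfl

end TypeII4

theorem stmt_14_general (F : Type*) [Field F] :
    -- with f(i,j,k,t) = j + i·t, the graph Q(p,s,f) has girth at least 6
    (6 : ℕ∞) ≤ (bip (TypeII4.adj F fun i j _ t => j + i * t)).egirth :=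
  six_le_egirth_bip fun _ _ _ _ => TypeII4.eq_or_eq_of_adj F

theorem stmt_14 (p s : ℕ) (hp : p.Prime) (hs : 0 < s)
    (F : Type*) [Field F] [Fintype F] (hF : Fintype.card F = p ^ s) :
    -- with f(i,j,k,t) = j + i·t, the graph Q(p,s,f) has girth at least 6
    (6 : ℕ∞) ≤ (bip (TypeII4.adj F fun i j _ t => j + i * t)).egirth :=
  stmt_14_general F
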